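/- Euclidean norm of the embedding: for every x ∈ [0,1)^d, ||Ψ(x)||_2^2 = ∑_{k=0}^{d-1} 2^{-k} C(m,k) C(d-1,k). In particular, ||Ψ(x)||_2 is the same for all x. -/

import Mathlib

/-!
Each factor `χ_{R⁺} - χ_{R⁻}` of `Ψ_{k,r,R}` squares to `χ_R`, because the two halves of `R`
partition it; hence `Ψ_{k,r,R}(x)² = 2^{-k} χ_R(x)`. For a fixed shape `ℓ` of `R`, a point of
`[0,1)^d` lies in exactly one box of that shape (the one indexed by `⌊x i 2^{ℓ i}⌋`), so summing
over positions leaves `2^{-k}` times the number of pairs `(r, ℓ)`. The chains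
`0 = r 0 < ⋯ < r k` correspond to `k`-subsets of `{1, …, d - 1}`, and the shapes to the ways of
writing `m - k` as a sum of `k + 1` nonnegative levels along `r`: `C(d - 1, k)` and `C(m, k)`.
-/

open MeasureTheory Finset

/-- The dyadic box in `[0,1]^d` whose `i`-th factor is the dyadic interval
`[jj i / 2^{ℓ i}, (jj i + 1) / 2^{ℓ i})`. -/
def dyadicBox (d : ℕ) (ℓ jj : Fin d → ℕ) : Set (Fin d → ℝ) :=
  {x | ∀ i, (jj i : ℝ) / 2 ^ ℓ i ≤ x i ∧ x i < ((jj i : ℝ) + 1) / 2 ^ ℓ i}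

/-- The indicator function of the dyadic box with levels `ℓ` and positions `jj`. -/
noncomputable def chi (d : ℕ) (ℓ jj : Fin d → ℕ) (x : Fin d → ℝ) : ℝ :=
  Set.indicator (dyadicBox d ℓ jj) 1 x

/-- The embedding coordinate `Ψ_{k,r,R}` where `R` is the dyadic box with levels `ℓ` and
positions `jj`: for `k = 0` it is `χ_R`; for `k ≥ 1` it is
`2^{-k/2} ∏_{t=1}^{k} (χ_{R_{r_t}^+} - χ_{R_{r_t}^-})`, the halves being taken in
coordinate `r t`. -/
noncomputable def Psi (d k : ℕ) (r : Fin (k + 1) → Fin d) (ℓ jj : Fin d → ℕ)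
    (x : Fin d → ℝ) : ℝ :=
  if k = 0 then chi d ℓ jj x
  else (Real.sqrt 2)⁻¹ ^ k *
    ∏ t ∈ Finset.Ioi (0 : Fin (k + 1)),
      (chi d (Function.update ℓ (r t) (ℓ (r t) + 1))
          (Function.update jj (r t) (2 * jj (r t) + 1)) x
        - chi d (Function.update ℓ (r t) (ℓ (r t) + 1))
          (Function.update jj (r t) (2 * jj (r t))) x)

/-- The index set `𝒯` of admissible triples `(k, r, R)` at scale `m`. -/
def Triples (d m : ℕ) : Set ((k : ℕ) × (Fin (k + 1) → Fin d) × (Fin d → ℕ) × (Fin d → ℕ)) :=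
  {t | t.1 < d ∧ t.1 ≤ m ∧ StrictMono t.2.1 ∧ (t.2.1 0 : ℕ) = 0 ∧
    (∑ i, t.2.2.1 i) = m - t.1 ∧ (∀ i, t.2.2.2 i < 2 ^ t.2.2.1 i) ∧
    (∀ i, i ∉ Set.range t.2.1 → t.2.2.1 i = 0)}

section DyadicBox

variable {d : ℕ} {ℓ jj : Fin d → ℕ} {x : Fin d → ℝ}

lemma mem_dyadicBox_iff_eq_floor (hx : ∀ i, 0 ≤ x i) :
    x ∈ dyadicBox d ℓ jj ↔ jj = fun i => ⌊x i * 2 ^ ℓ i⌋₊ := by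
  simp only [dyadicBox, Set.mem_ofPred_eq, funext_iff]
  refine forall_congr' fun i => ?_
  rw [eq_comm, Nat.floor_eq_iff (mul_nonneg (hx i) (by positivity)),
    div_le_iff₀ (by positivity), lt_div_iff₀ (by positivity)]

lemma floor_mul_two_pow_eq_div_two (y : ℝ) (l : ℕ) :
    ⌊y * 2 ^ l⌋₊ = ⌊y * 2 ^ (l + 1)⌋₊ / 2 := by
  rw [← Nat.floor_div_ofNat, pow_succ, ← mul_assoc, mul_div_cancel_right₀ _ two_ne_zero]

lemma mem_dyadicBox_half_iff (hx : ∀ i, 0 ≤ x i) (c : Fin d) {b : ℕ} (hb : b < 2) :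
    x ∈ dyadicBox d (Function.update ℓ c (ℓ c + 1)) (Function.update jj c (2 * jj c + b)) ↔
      x ∈ dyadicBox d ℓ jj ∧ ⌊x c * 2 ^ (ℓ c + 1)⌋₊ % 2 = b := by
  have hcoarse := floor_mul_two_pow_eq_div_two (x c) (ℓ c)
  simp only [mem_dyadicBox_iff_eq_floor hx, funext_iff]
  constructor
  · intro h
    have hc := h c
    simp only [Function.update_self] at hc
    refine ⟨fun i => ?_, by omega⟩
    rcases eq_or_ne i c with rfl | hi
    · omega
    · simpa [hi] using h i
  · rintro ⟨h, hparity⟩ i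
    rcases eq_or_ne i c with rfl | hi
    · simp only [Function.update_self]
      have := h i
      omega
    · simpa [hi] using h i

end DyadicBox

section Chi

variable {d : ℕ} {x : Fin d → ℝ}

lemma chi_eq_ite_floor (hx : ∀ i, 0 ≤ x i) (ℓ jj : Fin d → ℕ) :
    chi d ℓ jj x = if jj = (fun i => ⌊x i * 2 ^ ℓ i⌋₊) then 1 else 0 := by
  classical
  simp only [chi, Set.indicator_apply, mem_dyadicBox_iff_eq_floor hx, Pi.one_apply]

lemma chi_pow (ℓ jj : Fin d → ℕ) {n : ℕ} (hn : n ≠ 0) : chi d ℓ jj x ^ n = chi d ℓ jj x := by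
  classical
  simp only [chi, Set.indicator_apply, Pi.one_apply]
  split_ifs <;> simp [hn]

lemma sq_chi_half_sub_chi_half (hx : ∀ i, 0 ≤ x i) (ℓ jj : Fin d → ℕ) (c : Fin d) :
    (chi d (Function.update ℓ c (ℓ c + 1)) (Function.update jj c (2 * jj c + 1)) x
      - chi d (Function.update ℓ c (ℓ c + 1)) (Function.update jj c (2 * jj c)) x) ^ 2
      = chi d ℓ jj x := by
  classical
  have hlower := mem_dyadicBox_half_iff (ℓ := ℓ) (jj := jj) hx c (b := 0) (by norm_num)
  rw [add_zero] at hlower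
  simp only [chi, Set.indicator_apply, Pi.one_apply, hlower,
    mem_dyadicBox_half_iff hx c (b := 1) one_lt_two]
  rcases Nat.mod_two_eq_zero_or_one ⌊x c * 2 ^ (ℓ c + 1)⌋₊ with h | h <;>
    by_cases hR : x ∈ dyadicBox d ℓ jj <;> simp [h, hR]

lemma Psi_sq (hx : ∀ i, 0 ≤ x i) (k : ℕ) (r : Fin (k + 1) → Fin d) (ℓ jj : Fin d → ℕ) :
    Psi d k r ℓ jj x ^ 2 = (1 / 2 : ℝ) ^ k * chi d ℓ jj x := by
  rcases eq_or_ne k 0 with rfl | hk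
  · simp [Psi, chi_pow ℓ jj two_ne_zero]
  · have hsqrt : ((Real.sqrt 2)⁻¹ ^ k) ^ 2 = (1 / 2 : ℝ) ^ k := by
      rw [← pow_mul, mul_comm, pow_mul, inv_pow, Real.sq_sqrt zero_le_two, one_div]
    rw [Psi, if_neg hk, mul_pow, hsqrt, ← Finset.prod_pow,
      Finset.prod_congr rfl fun t _ => sq_chi_half_sub_chi_half hx ℓ jj (r t),
      Finset.prod_const, Fin.card_Ioi, Fin.val_zero, Nat.add_sub_cancel, Nat.sub_zero,
      chi_pow ℓ jj hk]

def dyadicPositions (ℓ : Fin d → ℕ) : Finset (Fin d → ℕ) :=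
  Fintype.piFinset fun i => range (2 ^ ℓ i)

lemma sum_chi_dyadicPositions (hx : ∀ i, 0 ≤ x i ∧ x i < 1) (ℓ : Fin d → ℕ) :
    ∑ jj ∈ dyadicPositions ℓ, chi d ℓ jj x = 1 := by
  classical
  simp only [chi_eq_ite_floor (fun i => (hx i).1), Finset.sum_ite_eq', ite_eq_left_iff]
  intro hnot
  refine absurd (Fintype.mem_piFinset.2 fun i => ?_) hnot
  rw [Finset.mem_range, Nat.floor_lt (mul_nonneg (hx i).1 (by positivity))]
  push_cast
  exact mul_lt_of_lt_one_left (by positivity) (hx i).2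

end Chi

lemma Finset.card_piAntidiag_nat {ι : Type*} [DecidableEq ι] (s : Finset ι) (n : ℕ) :
    #(piAntidiag s n) = (#s + n - 1).choose n := by
  rw [← card_finsuppAntidiag_nat_eq_choose, finsuppAntidiag, card_map, card_attach]

lemma Finset.mem_piAntidiag_iff_sum_univ {ι : Type*} [Fintype ι] [DecidableEq ι]
    {s : Finset ι} {n : ℕ} {f : ι → ℕ} :
    f ∈ piAntidiag s n ↔ ∑ i, f i = n ∧ ∀ i ∉ s, f i = 0 := by
  rw [mem_piAntidiag]
  constructor
  · rintro ⟨hsum, hsupp⟩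
    have hzero : ∀ i ∉ s, f i = 0 := fun i hi => by_contra fun h => hi (hsupp i h)
    exact ⟨hsum ▸ (sum_subset (subset_univ s) fun i _ hi => hzero i hi).symm, hzero⟩
  · rintro ⟨hsum, hzero⟩
    exact ⟨hsum ▸ sum_subset (subset_univ s) fun i _ hi => hzero i hi,
      fun i hi => by_contra fun h => hi (hzero i h)⟩

lemma card_piAntidiag_image_of_injective {ι : Type*} [DecidableEq ι] {k : ℕ}
    {r : Fin (k + 1) → ι} (hr : Function.Injective r) (n : ℕ) :
    #(piAntidiag (univ.image r) n) = (n + k).choose k := by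
  rw [card_piAntidiag_nat, card_image_of_injective _ hr, card_univ, Fintype.card_fin,
    show k + 1 + n - 1 = k + n by omega, add_comm n k, Nat.choose_symm_add]

open Classical in
def rootedChains (d k : ℕ) : Finset (Fin (k + 1) → Fin d) :=
  {r | StrictMono r ∧ (r 0 : ℕ) = 0}

lemma succ_ne_zero_of_rootedChain {n k : ℕ} {r : Fin (k + 1) → Fin (n + 1)}
    (hr : StrictMono r ∧ (r 0 : ℕ) = 0) (j : Fin k) : r j.succ ≠ 0 :=
  Fin.ne_zero_of_lt ((Fin.ext hr.2 : r 0 = 0) ▸ hr.1 j.succ_pos)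

def rootedChainsEquiv (n k : ℕ) :
    {r : Fin (k + 1) → Fin (n + 1) // StrictMono r ∧ (r 0 : ℕ) = 0} ≃ (Fin k ↪o Fin n) where
  toFun r := OrderEmbedding.ofStrictMono
    (fun j => (r.1 j.succ).pred (succ_ne_zero_of_rootedChain r.2 j))
    fun _ _ h => Fin.pred_lt_pred_iff.2 (r.2.1 (Fin.succ_lt_succ_iff.2 h))
  invFun g := ⟨Fin.cons 0 (Fin.succ ∘ g), Fin.strictMono_cons.2
    ⟨fun j => Fin.succ_pos _, Fin.strictMono_succ.comp g.strictMono⟩, rfl⟩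
  left_inv r := by
    ext1
    funext t
    induction t using Fin.cases with
    | zero => exact (Fin.ext r.2.2).symm
    | succ j => exact Fin.succ_pred _ (succ_ne_zero_of_rootedChain r.2 j)
  right_inv g := by
    ext j
    simp

lemma card_rootedChains (n k : ℕ) : #(rootedChains (n + 1) k) = n.choose k := by
  rw [rootedChains, ← Fintype.card_subtype, ← Nat.card_eq_fintype_card,
    Nat.card_congr ((rootedChainsEquiv n k).trans Set.powersetCard.ofFinEmbEquiv),
    Set.powersetCard.card, Nat.card_fin]

section DependentProduct

variable {α β : Type*} [DecidableEq (α × β)] {s : Finset α} {t : α → Finset β}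

lemma Finset.mem_biUnion_image_prodMk {p : α × β} :
    p ∈ s.biUnion (fun a => (t a).image (Prod.mk a)) ↔ p.1 ∈ s ∧ p.2 ∈ t p.1 := by
  obtain ⟨a, b⟩ := p
  simp

lemma Finset.sum_biUnion_image_prodMk {M : Type*} [AddCommMonoid M] (f : α × β → M) :
    ∑ p ∈ s.biUnion (fun a => (t a).image (Prod.mk a)), f p = ∑ a ∈ s, ∑ b ∈ t a, f (a, b) :=
  sum_finset_product _ _ _ fun _ => mem_biUnion_image_prodMk

end DependentProduct

section Triples

variable {d m : ℕ}

def triplesFinset (d m : ℕ) :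
    Finset ((k : ℕ) × (Fin (k + 1) → Fin d) × (Fin d → ℕ) × (Fin d → ℕ)) :=
  (range d).sigma fun k => (rootedChains d k).biUnion fun r =>
    ((piAntidiag (univ.image r) (m - k)).biUnion fun ℓ =>
      (dyadicPositions ℓ).image (Prod.mk ℓ)).image (Prod.mk r)

lemma coe_triplesFinset (hm : d - 1 ≤ m) : (triplesFinset d m : Set _) = Triples d m := by
  ext ⟨k, r, ℓ, jj⟩
  simp only [triplesFinset, coe_sigma, Set.mem_sigma_iff, mem_coe, mem_biUnion_image_prodMk,
    rootedChains, mem_filter_univ, mem_piAntidiag_iff_sum_univ, mem_image, mem_univ, true_and,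
    Set.mem_range, dyadicPositions, Fintype.mem_piFinset, mem_range, Triples, Set.mem_ofPred_eq]
  constructor
  · rintro ⟨hk, ⟨hmono, hr0⟩, ⟨hsum, hsupp⟩, hjj⟩
    exact ⟨hk, by omega, hmono, hr0, hsum, hjj, hsupp⟩
  · rintro ⟨hk, -, hmono, hr0, hsum, hjj, hsupp⟩
    exact ⟨hk, ⟨hmono, hr0⟩, ⟨hsum, hsupp⟩, hjj⟩

lemma finsum_triples_eq_sum (hm : d - 1 ≤ m) {M : Type*} [AddCommMonoid M]
    (f : (k : ℕ) × (Fin (k + 1) → Fin d) × (Fin d → ℕ) × (Fin d → ℕ) → M) :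
    ∑ᶠ t : Triples d m, f t = ∑ k ∈ range d, ∑ r ∈ rootedChains d k,
      ∑ ℓ ∈ piAntidiag (univ.image r) (m - k), ∑ jj ∈ dyadicPositions ℓ, f ⟨k, r, ℓ, jj⟩ := by
  rw [finsum_set_coe_eq_finsum_mem, ← coe_triplesFinset hm, finsum_mem_coe_finset]
  simp only [triplesFinset, sum_sigma, sum_biUnion_image_prodMk]

end Triples

/-- For every `x ∈ [0,1)^d`, the squared Euclidean norm of the embedding vector `Ψ(x)`
equals `∑_{k=0}^{d-1} 2^{-k} C(m,k) C(d-1,k)`; in particular it is independent of `x`. -/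
theorem stmt14 (d m : ℕ) (hd : 1 ≤ d) (hm : d - 1 ≤ m)
    (x : Fin d → ℝ) (hx : ∀ i, 0 ≤ x i ∧ x i < 1) :
    ∑ᶠ t : Triples d m, (Psi d t.val.1 t.val.2.1 t.val.2.2.1 t.val.2.2.2 x) ^ 2
      = ∑ k ∈ Finset.range d, (1/2 : ℝ) ^ k * (m.choose k) * ((d - 1).choose k) := by
  obtain ⟨n, rfl⟩ := Nat.exists_eq_add_of_le' hd
  rw [finsum_triples_eq_sum hm fun t => Psi _ t.1 t.2.1 t.2.2.1 t.2.2.2 x ^ 2]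
  refine sum_congr rfl fun k hk => ?_
  have hkm : k ≤ m := by rw [mem_range] at hk; omega
  have hlevels : ∀ r ∈ rootedChains (n + 1) k,
      #(piAntidiag (univ.image r) (m - k)) = m.choose k := fun r hr => by
    rw [card_piAntidiag_image_of_injective (mem_filter.1 hr).2.1.injective, Nat.sub_add_cancel hkm]
  simp only [Psi_sq (fun i => (hx i).1), ← mul_sum, sum_chi_dyadicPositions hx, mul_one,
    sum_const, nsmul_eq_mul]
  rw [sum_congr rfl fun r hr => by rw [hlevels r hr], sum_const, card_rootedChains,
    Nat.add_sub_cancel, nsmul_eq_mul]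
  ring
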